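/- Let E=(C,V) be an election, let q ≥ 0, b ≥ 1 and t ≥ 0 be integers, and fix a voter v ∈ V. Then C admits a partition into at most t nonempty parts, each a (q,b)-approximate clone, if and only if C admits a partition into segments S_1,…,S_{t'} (with respect to v) such that no S_i is enclosed by another S_j (with respect to v) and size(S_1)+⋯+size(S_{t'}) ≤ t. -/

import Mathlib

/-- `X` is a `(q,b)`-approximate clone in the election given by `pos`:
nonempty, of size at most `b`, and every voter's positions on `X` have spread at most
`q + b − 1`. -/
def IsApproxClone {C V : Type*} (pos : V → C → ℕ) (q b : ℕ) (X : Finset C) : Prop :=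
  X.Nonempty ∧ X.card ≤ b ∧
    ∀ u : V, ∀ x ∈ X, ∀ y ∈ X, (pos u x : ℤ) - (pos u y : ℤ) ≤ (q : ℤ) + (b : ℤ) - 1

/-- `P` is enclosed by `Q` with respect to the position function `p` of a fixed voter:
every member of `P` lies strictly between the minimum and the maximum position of `Q`. -/
def EnclosedBy {C : Type*} (p : C → ℕ) (P Q : Finset C) : Prop :=
  ∀ c ∈ P, (∃ x ∈ Q, p x < p c) ∧ (∃ y ∈ Q, p c < p y)

/-- `(Q, Ps)` is an implementation of the segment `S` (with respect to the fixed voter whose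
position function is `pos v`): `Q` is a `(q,b)`-approximate clone (the base), the members of
`Ps` are `(q,b)`-approximate clones each enclosed by `Q`, and they partition `S`.
Its size is `Ps.card + 1`. -/
def IsImplementation {C V : Type*} [DecidableEq C] (pos : V → C → ℕ) (q b : ℕ) (v : V)
    (S Q : Finset C) (Ps : Finset (Finset C)) : Prop :=
  IsApproxClone pos q b Q ∧
  (∀ P ∈ Ps, IsApproxClone pos q b P ∧ EnclosedBy (pos v) P Q) ∧
  (∀ P ∈ Ps, Disjoint P Q) ∧
  (∀ P ∈ Ps, ∀ P' ∈ Ps, P ≠ P' → Disjoint P P') ∧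
  Q ∪ Ps.sup id = S

/-- `S` is a segment (with respect to voter `v`): it has an implementation. -/
def IsSegment {C V : Type*} [DecidableEq C] (pos : V → C → ℕ) (q b : ℕ) (v : V)
    (S : Finset C) : Prop :=
  ∃ Q Ps, IsImplementation pos q b v S Q Ps

/-- `size(S)`: the minimum size of an implementation of the segment `S`. -/
noncomputable def segSize {C V : Type*} [DecidableEq C] (pos : V → C → ℕ) (q b : ℕ) (v : V)
    (S : Finset C) : ℕ :=
  sInf {n : ℕ | ∃ Q Ps, IsImplementation pos q b v S Q Ps ∧ n = Ps.card + 1}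

/-!
Forward direction: send every clone to a clone enclosing it that no clone of the partition
encloses (enclosure is a strict order on nonempty sets, so one exists). The fiber of such a
maximal clone `Q` is a segment with base `Q` and an implementation of size the cardinality of
the fiber. A segment lies within the span of its base, so if one of these segments enclosed
another, its base would be enclosed by a maximal clone, which is impossible.

Backward direction: splitting each segment along an implementation of minimal size gives a
partition into at most `∑ size(S)` clones.
-/

open Finset

section

variable {C : Type*}

section Enclosure

variable {p : C → ℕ} {P Q Q' R : Finset C}

theorem EnclosedBy.of_bounds (hQ' : ∀ x ∈ Q', (∃ y ∈ Q, p y ≤ p x) ∧ ∃ y ∈ Q, p x ≤ p y)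
    (h : EnclosedBy p R Q') : EnclosedBy p R Q := by
  intro c hc
  obtain ⟨⟨x, hx, hxc⟩, z, hz, hcz⟩ := h c hc
  obtain ⟨⟨y, hy, hyx⟩, -⟩ := hQ' x hx
  obtain ⟨-, y', hy', hzy'⟩ := hQ' z hz
  exact ⟨⟨y, hy, hyx.trans_lt hxc⟩, y', hy', hcz.trans_le hzy'⟩

theorem EnclosedBy.bounds (h : EnclosedBy p P Q) :
    ∀ x ∈ P, (∃ y ∈ Q, p y ≤ p x) ∧ ∃ y ∈ Q, p x ≤ p y := fun x hx =>
  let ⟨⟨y, hy, hyx⟩, z, hz, hxz⟩ := h x hx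
  ⟨⟨y, hy, hyx.le⟩, z, hz, hxz.le⟩

theorem EnclosedBy.trans (hPQ : EnclosedBy p P Q) (hQR : EnclosedBy p Q R) :
    EnclosedBy p P R :=
  hPQ.of_bounds hQR.bounds

theorem EnclosedBy.mono_left (h : EnclosedBy p P Q) (hRP : R ⊆ P) : EnclosedBy p R Q :=
  fun c hc => h c (hRP hc)

theorem not_enclosedBy_self (hP : P.Nonempty) : ¬ EnclosedBy p P P := by
  intro h
  obtain ⟨c, hc, hmax⟩ := P.exists_max_image p hP
  obtain ⟨-, y, hy, hcy⟩ := h c hc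
  exact (hmax y hy).not_gt hcy

theorem EnclosedBy.of_sup [DecidableEq C] {𝒳 : Finset (Finset C)}
    (h𝒳 : ∀ X ∈ 𝒳, X ≠ Q → EnclosedBy p X Q) (h : EnclosedBy p R (𝒳.sup id)) :
    EnclosedBy p R Q := by
  refine h.of_bounds fun x hx => ?_
  obtain ⟨X, hX, hxX⟩ := mem_sup.1 hx
  by_cases hXQ : X = Q
  · subst hXQ
    exact ⟨⟨x, hxX, le_rfl⟩, x, hxX, le_rfl⟩
  · exact (h𝒳 X hX hXQ).bounds x hxX

theorem exists_enclosedBy_maximal {ℱ : Finset (Finset C)} (hne : ∀ X ∈ ℱ, X.Nonempty)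
    {X : Finset C} (hX : X ∈ ℱ) :
    ∃ Q ∈ ℱ, (X = Q ∨ EnclosedBy p X Q) ∧ ∀ Y ∈ ℱ, ¬ EnclosedBy p Q Y := by
  classical
  -- among the members of `ℱ` enclosing `X`, one enclosed by the fewest members of `ℱ`
  let enclosers := fun Y => ℱ.filter (EnclosedBy p Y)
  obtain ⟨Q, hQ, hmin⟩ := (ℱ.filter fun Y => X = Y ∨ EnclosedBy p X Y).exists_min_image
    (fun Y => (enclosers Y).card) ⟨X, mem_filter.2 ⟨hX, Or.inl rfl⟩⟩
  obtain ⟨hQℱ, hXQ⟩ := mem_filter.1 hQ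
  refine ⟨Q, hQℱ, hXQ, fun Y hY hQY => ?_⟩
  have hXY : X = Y ∨ EnclosedBy p X Y := by
    rcases hXQ with rfl | hXQ
    exacts [Or.inr hQY, Or.inr (hXQ.trans hQY)]
  have hfewer : enclosers Y ⊂ enclosers Q := by
    have hsub : enclosers Y ⊆ enclosers Q :=
      monotone_filter_right ℱ fun _ _ hYZ => hQY.trans hYZ
    refine (ssubset_iff_of_subset hsub).2 ⟨Y, mem_filter.2 ⟨hY, hQY⟩, fun hYY => ?_⟩
    exact not_enclosedBy_self (hne Y hY) (mem_filter.1 hYY).2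
  exact (hmin Y (mem_filter.2 ⟨hY, hXY⟩)).not_gt (card_lt_card hfewer)

end Enclosure

section Families

variable [DecidableEq C] {ℱ 𝒜 ℬ : Finset (Finset C)}

theorem disjoint_sup_of_subset_of_disjoint
    (hℱ : ∀ X ∈ ℱ, ∀ Y ∈ ℱ, X ≠ Y → Disjoint X Y) (h𝒜 : 𝒜 ⊆ ℱ) (hℬ : ℬ ⊆ ℱ)
    (h𝒜ℬ : Disjoint 𝒜 ℬ) : Disjoint (𝒜.sup id) (ℬ.sup id) := by
  refine Finset.disjoint_sup_left.2 fun X hX => Finset.disjoint_sup_right.2 fun Y hY => ?_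
  exact hℱ X (h𝒜 hX) Y (hℬ hY) fun hXY => disjoint_left.1 h𝒜ℬ hX (hXY ▸ hY)

theorem pairwise_disjoint_biUnion {F : Finset C → Finset (Finset C)}
    (hℱ : ∀ S ∈ ℱ, ∀ S' ∈ ℱ, S ≠ S' → Disjoint S S')
    (hF : ∀ S ∈ ℱ, ∀ X ∈ F S, ∀ Y ∈ F S, X ≠ Y → Disjoint X Y)
    (hFS : ∀ S ∈ ℱ, ∀ X ∈ F S, X ⊆ S) :
    ∀ X ∈ ℱ.biUnion F, ∀ Y ∈ ℱ.biUnion F, X ≠ Y → Disjoint X Y := by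
  simp only [mem_biUnion]
  rintro X ⟨S, hS, hX⟩ Y ⟨S', hS', hY⟩ hXY
  by_cases hSS' : S = S'
  · subst hSS'
    exact hF S hS X hX Y hY hXY
  · exact (hℱ S hS S' hS' hSS').mono (hFS S hS X hX) (hFS S' hS' Y hY)

end Families

section Segments

variable [DecidableEq C] {V : Type*} {pos : V → C → ℕ} {q b : ℕ} {v : V}
  {S Q : Finset C} {Ps : Finset (Finset C)}

namespace IsImplementation

theorem isApproxClone_of_mem_insert (h : IsImplementation pos q b v S Q Ps) :
    ∀ X ∈ insert Q Ps, IsApproxClone pos q b X := by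
  simp only [mem_insert, forall_eq_or_imp]
  exact ⟨h.1, fun X hX => (h.2.1 X hX).1⟩

theorem pairwise_disjoint_insert (h : IsImplementation pos q b v S Q Ps) :
    ∀ X ∈ insert Q Ps, ∀ Y ∈ insert Q Ps, X ≠ Y → Disjoint X Y := by
  obtain ⟨-, -, hPQ, hPP, -⟩ := h
  simp only [mem_insert, forall_eq_or_imp]
  refine ⟨⟨fun hQQ => absurd rfl hQQ, fun Y hY _ => (hPQ Y hY).symm⟩,
    fun X hX => ⟨fun _ => hPQ X hX, hPP X hX⟩⟩

theorem sup_insert_eq (h : IsImplementation pos q b v S Q Ps) :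
    (insert Q Ps).sup id = S := by
  rw [sup_insert]
  exact h.2.2.2.2

theorem segSize_le (h : IsImplementation pos q b v S Q Ps) :
    segSize pos q b v S ≤ Ps.card + 1 :=
  Nat.sInf_le ⟨Q, Ps, h, rfl⟩

end IsImplementation

theorem IsSegment.exists_implementation_segSize (hS : IsSegment pos q b v S) :
    ∃ Q Ps, IsImplementation pos q b v S Q Ps ∧ Ps.card + 1 = segSize pos q b v S := by
  obtain ⟨Q, Ps, h⟩ := hS
  obtain ⟨Q, Ps, h, hsize⟩ := Nat.sInf_mem (⟨Ps.card + 1, Q, Ps, h, rfl⟩ :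
    {n | ∃ Q Ps, IsImplementation pos q b v S Q Ps ∧ n = Ps.card + 1}.Nonempty)
  exact ⟨Q, Ps, h, hsize.symm⟩

theorem isImplementation_sup_erase {𝒳 : Finset (Finset C)} (hQ : Q ∈ 𝒳)
    (hclone : ∀ X ∈ 𝒳, IsApproxClone pos q b X)
    (hdisj : ∀ X ∈ 𝒳, ∀ Y ∈ 𝒳, X ≠ Y → Disjoint X Y)
    (henc : ∀ X ∈ 𝒳, X ≠ Q → EnclosedBy (pos v) X Q) :
    IsImplementation pos q b v (𝒳.sup id) Q (𝒳.erase Q) := by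
  refine ⟨hclone Q hQ, fun X hX => ?_, fun X hX => ?_, fun X hX Y hY => ?_, ?_⟩
  · exact ⟨hclone X (mem_of_mem_erase hX), henc X (mem_of_mem_erase hX) (ne_of_mem_erase hX)⟩
  · exact hdisj X (mem_of_mem_erase hX) Q hQ (ne_of_mem_erase hX)
  · exact hdisj X (mem_of_mem_erase hX) Y (mem_of_mem_erase hY)
  · conv_rhs => rw [← insert_erase hQ, sup_insert]
    rfl

end Segments

section Partitions

variable [DecidableEq C] {V : Type*} {pos : V → C → ℕ} {q b : ℕ} {v : V}

theorem exists_clone_partition_of_segment_partition {𝒮 : Finset (Finset C)}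
    (hseg : ∀ S ∈ 𝒮, IsSegment pos q b v S) (hcover : ∀ c : C, ∃ S ∈ 𝒮, c ∈ S)
    (hdisj : ∀ S ∈ 𝒮, ∀ S' ∈ 𝒮, S ≠ S' → Disjoint S S') :
    ∃ P : Finset (Finset C), P.card ≤ ∑ S ∈ 𝒮, segSize pos q b v S ∧
      (∀ X ∈ P, IsApproxClone pos q b X) ∧
      (∀ c : C, ∃ X ∈ P, c ∈ X) ∧
      (∀ X ∈ P, ∀ Y ∈ P, X ≠ Y → Disjoint X Y) := by
  choose! Q Ps himpl hsize using fun S hS => (hseg S hS).exists_implementation_segSize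
  refine ⟨𝒮.biUnion fun S => insert (Q S) (Ps S), ?_, ?_, fun c => ?_, ?_⟩
  · exact card_biUnion_le.trans
      (sum_le_sum fun S hS => (card_insert_le _ _).trans (hsize S hS).le)
  · simp only [mem_biUnion]
    rintro X ⟨S, hS, hX⟩
    exact (himpl S hS).isApproxClone_of_mem_insert X hX
  · obtain ⟨S, hS, hc⟩ := hcover c
    rw [← (himpl S hS).sup_insert_eq, mem_sup] at hc
    obtain ⟨X, hX, hcX⟩ := hc
    exact ⟨X, mem_biUnion.2 ⟨S, hS, hX⟩, hcX⟩
  · refine pairwise_disjoint_biUnion hdisj (fun S hS => (himpl S hS).pairwise_disjoint_insert)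
      fun S hS X hX => ?_
    rw [← (himpl S hS).sup_insert_eq]
    exact le_sup (f := id) hX

theorem exists_segment_partition_of_clone_partition {P : Finset (Finset C)}
    (hclone : ∀ X ∈ P, IsApproxClone pos q b X) (hcover : ∀ c : C, ∃ X ∈ P, c ∈ X)
    (hdisj : ∀ X ∈ P, ∀ Y ∈ P, X ≠ Y → Disjoint X Y) :
    ∃ 𝒮 : Finset (Finset C),
      (∀ S ∈ 𝒮, IsSegment pos q b v S) ∧
      (∀ c : C, ∃ S ∈ 𝒮, c ∈ S) ∧
      (∀ S ∈ 𝒮, ∀ S' ∈ 𝒮, S ≠ S' → Disjoint S S') ∧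
      (∀ S ∈ 𝒮, ∀ S' ∈ 𝒮, S ≠ S' → ¬ EnclosedBy (pos v) S S') ∧
      ∑ S ∈ 𝒮, segSize pos q b v S ≤ P.card := by
  choose! g hgP hXg hgmax using fun X (hX : X ∈ P) =>
    exists_enclosedBy_maximal (p := pos v) (fun Y hY => (hclone Y hY).1) hX
  let fiber := fun Q => P.filter (g · = Q)
  have hfiber : ∀ X ∈ P, g X ∈ fiber (g X) := by
    intro X hX
    refine mem_filter.2 ⟨hgP X hX, ?_⟩
    rcases hXg (g X) (hgP X hX) with h | h
    exacts [h.symm, absurd h (hgmax X hX _ (hgP _ (hgP X hX)))]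
  have henc : ∀ Q, ∀ Y ∈ fiber Q, Y ≠ Q → EnclosedBy (pos v) Y Q := by
    intro Q Y hY hYQ
    obtain ⟨hYP, rfl⟩ := mem_filter.1 hY
    exact (hXg Y hYP).resolve_left hYQ
  have himpl : ∀ X ∈ P, IsImplementation pos q b v ((fiber (g X)).sup id) (g X)
      ((fiber (g X)).erase (g X)) := fun X hX =>
    isImplementation_sup_erase (hfiber X hX) (fun Y hY => hclone Y (mem_filter.1 hY).1)
      (fun Y hY Z hZ => hdisj Y (mem_filter.1 hY).1 Z (mem_filter.1 hZ).1) (henc (g X))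
  refine ⟨(P.image g).image fun Q => (fiber Q).sup id, ?_, fun c => ?_, ?_, ?_, ?_⟩
  · simp only [forall_mem_image]
    exact fun X hX => ⟨_, _, himpl X hX⟩
  · obtain ⟨X, hX, hcX⟩ := hcover c
    exact ⟨_, mem_image_of_mem _ (mem_image_of_mem g hX),
      mem_sup.2 ⟨X, mem_filter.2 ⟨hX, rfl⟩, hcX⟩⟩
  · simp only [forall_mem_image]
    intro X _ Y _ hXY
    have hgXY : g X ≠ g Y := fun h => hXY (by rw [h])
    exact disjoint_sup_of_subset_of_disjoint hdisj (filter_subset _ P) (filter_subset _ P)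
      (disjoint_filter.2 fun _ _ hZX hZY => hgXY (hZX.symm.trans hZY))
  · simp only [forall_mem_image]
    intro X hX Y hY _ hXY
    -- a fiber lies within the span of its base
    exact hgmax X hX (g Y) (hgP Y hY)
      ((hXY.mono_left (le_sup (f := id) (hfiber X hX))).of_sup (henc (g Y)))
  · calc ∑ S ∈ (P.image g).image (fun Q => (fiber Q).sup id), segSize pos q b v S
        ≤ ∑ Q ∈ P.image g, segSize pos q b v ((fiber Q).sup id) :=
          sum_image_le_of_nonneg fun _ _ => Nat.zero_le _
      _ ≤ ∑ Q ∈ P.image g, (fiber Q).card := by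
          refine sum_le_sum ?_
          simp only [forall_mem_image]
          exact fun X hX => (himpl X hX).segSize_le.trans_eq (card_erase_add_one (hfiber X hX))
      _ = P.card := (card_eq_sum_card_image g P).symm

end Partitions

end

theorem stmt_7_general {C V : Type*} [DecidableEq C]
    (pos : V → C → ℕ)
    (q b t : ℕ) (v : V) :
    (∃ P : Finset (Finset C), P.card ≤ t ∧
        (∀ X ∈ P, IsApproxClone pos q b X) ∧
        (∀ c : C, ∃ X ∈ P, c ∈ X) ∧
        (∀ X ∈ P, ∀ Y ∈ P, X ≠ Y → Disjoint X Y)) ↔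
      (∃ 𝒮 : Finset (Finset C),
        (∀ S ∈ 𝒮, IsSegment pos q b v S) ∧
        (∀ c : C, ∃ S ∈ 𝒮, c ∈ S) ∧
        (∀ S ∈ 𝒮, ∀ S' ∈ 𝒮, S ≠ S' → Disjoint S S') ∧
        (∀ S ∈ 𝒮, ∀ S' ∈ 𝒮, S ≠ S' → ¬ EnclosedBy (pos v) S S') ∧
        ∑ S ∈ 𝒮, segSize pos q b v S ≤ t) := by
  constructor
  · rintro ⟨P, hcard, hclone, hcover, hdisj⟩
    obtain ⟨𝒮, hseg, hcover', hdisj', hnenc, hsum⟩ :=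
      exists_segment_partition_of_clone_partition (v := v) hclone hcover hdisj
    exact ⟨𝒮, hseg, hcover', hdisj', hnenc, hsum.trans hcard⟩
  · rintro ⟨𝒮, hseg, hcover, hdisj, -, hsum⟩
    obtain ⟨P, hcard, hclone, hcover', hdisj'⟩ :=
      exists_clone_partition_of_segment_partition hseg hcover hdisj
    exact ⟨P, hcard.trans hsum, hclone, hcover', hdisj'⟩

/-- Let `(C,V)` be an election, `q ≥ 0`, `b ≥ 1`, `t ≥ 0`, and fix a voter
`v`. Then `C` admits a partition into at most `t` nonempty parts, each a `(q,b)`-approximate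
clone, iff `C` admits a partition into segments (w.r.t. `v`) none of which is enclosed by
another, whose sizes sum to at most `t`. -/
theorem stmt_7 {C V : Type*} [Fintype C] [DecidableEq C]
    (pos : V → C → ℕ)
    (hbij : ∀ v : V, Set.BijOn (pos v) Set.univ (Set.Icc 1 (Fintype.card C)))
    (q b t : ℕ) (hb : 1 ≤ b) (v : V) :
    (∃ P : Finset (Finset C), P.card ≤ t ∧
        (∀ X ∈ P, IsApproxClone pos q b X) ∧
        (∀ c : C, ∃ X ∈ P, c ∈ X) ∧
        (∀ X ∈ P, ∀ Y ∈ P, X ≠ Y → Disjoint X Y)) ↔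
      (∃ 𝒮 : Finset (Finset C),
        (∀ S ∈ 𝒮, IsSegment pos q b v S) ∧
        (∀ c : C, ∃ S ∈ 𝒮, c ∈ S) ∧
        (∀ S ∈ 𝒮, ∀ S' ∈ 𝒮, S ≠ S' → Disjoint S S') ∧
        (∀ S ∈ 𝒮, ∀ S' ∈ 𝒮, S ≠ S' → ¬ EnclosedBy (pos v) S S') ∧
        ∑ S ∈ 𝒮, segSize pos q b v S ≤ t) :=
  stmt_7_general pos q b t v
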